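/- arXiv:1703.08900 — 2 statements merged into one kernel-verified Lean document; each statement's English description precedes it below -/
import Mathlib

section
/- Let F ≥ 4 and m ≥ 1 be integers. Then the maximum K for which a (K, F, F−2, mF+F−2)-PDA exists equals (m·F·(F−1) + (F−2)·(F−3))/2 + ⌊(F−2)/2⌋; i.e., K_{(F,2,mF+F−2)} = m·K_{(F,2,F)} + K_{(F−2,2,F−2)} + K_{(2,2,F−2)}. -/
/-- A `(K, F, Z, S)` placement delivery array: an `F × K` array over
`{0, …, S-1} ∪ {*}` (with `none` playing the role of `*`) such that
(1) each integer occurs at most once in each row and in each column,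
(2) whenever two distinct cells `(a, b)` and `(c, d)` contain the same
integer, the opposite corners `(a, d)` and `(c, b)` contain `*`, and
(3) the symbol `*` occurs exactly `Z` times in each column. -/
def IsPDA (K F Z S : ℕ) (P : Fin F → Fin K → Option (Fin S)) : Prop :=
  (∀ (i : Fin F) (j j' : Fin K) (s : Fin S), P i j = some s → P i j' = some s → j = j') ∧
  (∀ (i i' : Fin F) (j : Fin K) (s : Fin S), P i j = some s → P i' j = some s → i = i') ∧
  (∀ (a c : Fin F) (b d : Fin K) (s : Fin S),
      (a, b) ≠ (c, d) → P a b = some s → P c d = some s →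
      P a d = none ∧ P c b = none) ∧
  (∀ j : Fin K, (Finset.univ.filter (fun i => P i j = none)).card = Z)

/-- There exists a `(K, F, Z, S)` placement delivery array. -/
def PDAExists (K F Z S : ℕ) : Prop :=
  ∃ P : Fin F → Fin K → Option (Fin S), IsPDA K F Z S P


/-!
Each column of a `(K, F, F - 2, S)`-PDA holds exactly two symbols. If `s` sits in cell `(i, j)`,
the other symbol of column `j` lies in a row where `s` never occurs, so `s` occurs at most
`F - 1` times. Call `s` full if it does; then the row missing `s` is the partner row of every
occurrence of `s`. The `n` full symbols missing a given row `x` fill `n (F - 1)` distinct columns,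
and the entries of row `x` in those columns are `n (F - 1)` distinct symbols occurring in row `x`,
hence not among the `n`; so `n F ≤ S`. Counting the `2K` symbol entries symbol by symbol
gives `2K ≤ S (F - 2) + F ⌊S / F⌋`, which for `S = mF + F - 2` is the claimed bound.

The bound is attained by the following array on the rows `Fin (F - 2) ⊕ Fin 2`: `m` copies, on
disjoint alphabets, of the edge array of `K_F` (column `{a, b}` holds `b` in row `a` and `a` in
row `b`), next to the edge array of `K_{F-2}` on the first `F - 2` rows, next to `⌊(F - 2) / 2⌋`
columns filled on the last two rows with distinct symbols of that same alphabet of size `F - 2`.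
-/

open Finset Function

variable {ι κ σ : Type*}

structure IsPDAOn [Fintype ι] (Z : ℕ) (P : ι → κ → Option σ) : Prop where
  row_inj : ∀ i j j' s, P i j = some s → P i j' = some s → j = j'
  col_inj : ∀ i i' j s, P i j = some s → P i' j = some s → i = i'
  eq_none_of_eq_some : ∀ a c b d s, (a, b) ≠ (c, d) → P a b = some s → P c d = some s →
    P a d = none ∧ P c b = none
  card_filter_eq_none : ∀ j, #{i | P i j = none} = Z

theorem isPDA_iff_isPDAOn {K F Z S : ℕ} {P : Fin F → Fin K → Option (Fin S)} :
    IsPDA K F Z S P ↔ IsPDAOn Z P :=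
  ⟨fun ⟨h₁, h₂, h₃, h₄⟩ => ⟨h₁, h₂, h₃, h₄⟩, fun ⟨h₁, h₂, h₃, h₄⟩ => ⟨h₁, h₂, h₃, h₄⟩⟩

namespace IsPDAOn

variable [Fintype ι] {Z : ℕ} {P : ι → κ → Option σ}

theorem reindex {ι' κ' τ : Type*} [Fintype ι'] (hP : IsPDAOn Z P) (eι : ι ≃ ι') (eκ : κ ≃ κ')
    (f : σ ↪ τ) : IsPDAOn Z fun i j => (P (eι.symm i) (eκ.symm j)).map f where
  row_inj i j j' s h h' := by
    obtain ⟨t, ht, rfl⟩ := Option.map_eq_some_iff.1 h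
    obtain ⟨t', ht', htt'⟩ := Option.map_eq_some_iff.1 h'
    rw [f.injective htt'] at ht'
    exact eκ.symm.injective (hP.row_inj _ _ _ _ ht ht')
  col_inj i i' j s h h' := by
    obtain ⟨t, ht, rfl⟩ := Option.map_eq_some_iff.1 h
    obtain ⟨t', ht', htt'⟩ := Option.map_eq_some_iff.1 h'
    rw [f.injective htt'] at ht'
    exact eι.symm.injective (hP.col_inj _ _ _ _ ht ht')
  eq_none_of_eq_some a c b d s hne h h' := by
    obtain ⟨t, ht, rfl⟩ := Option.map_eq_some_iff.1 h
    obtain ⟨t', ht', htt'⟩ := Option.map_eq_some_iff.1 h'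
    rw [f.injective htt'] at ht'
    have hne' : (eι.symm a, eκ.symm b) ≠ (eι.symm c, eκ.symm d) := by simpa using hne
    simp [hP.eq_none_of_eq_some _ _ _ _ _ hne' ht ht']
  card_filter_eq_none j := by
    rw [← hP.card_filter_eq_none (eκ.symm j)]
    exact card_equiv eι.symm (by simp)

theorem replicate (hP : IsPDAOn Z P) (ℓ : Type*) :
    IsPDAOn Z fun i (p : ℓ × κ) => (P i p.2).map (Prod.mk p.1) where
  row_inj i j j' s h h' := by
    obtain ⟨t, ht, rfl⟩ := Option.map_eq_some_iff.1 h
    obtain ⟨t', ht', htt'⟩ := Option.map_eq_some_iff.1 h'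
    simp only [Prod.mk.injEq] at htt'
    rw [htt'.2] at ht'
    exact Prod.ext htt'.1.symm (hP.row_inj _ _ _ _ ht ht')
  col_inj i i' j s h h' := by
    obtain ⟨t, ht, rfl⟩ := Option.map_eq_some_iff.1 h
    obtain ⟨t', ht', htt'⟩ := Option.map_eq_some_iff.1 h'
    simp only [Prod.mk.injEq] at htt'
    rw [htt'.2] at ht'
    exact hP.col_inj _ _ _ _ ht ht'
  eq_none_of_eq_some a c b d s hne h h' := by
    obtain ⟨t, ht, rfl⟩ := Option.map_eq_some_iff.1 h
    obtain ⟨t', ht', htt'⟩ := Option.map_eq_some_iff.1 h'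
    simp only [Prod.mk.injEq] at htt'
    rw [htt'.2] at ht'
    have hne' : (a, b.2) ≠ (c, d.2) := by
      intro hac
      simp only [Prod.mk.injEq] at hac
      exact hne (by rw [hac.1, Prod.ext htt'.1.symm hac.2])
    simp [hP.eq_none_of_eq_some _ _ _ _ _ hne' ht ht']
  card_filter_eq_none j := by simpa using hP.card_filter_eq_none j.2

theorem append {κ' σ' : Type*} {Q : ι → κ' → Option σ'} (hP : IsPDAOn Z P)
    (hQ : IsPDAOn Z Q) :
    IsPDAOn Z fun i =>
      Sum.elim (fun j => (P i j).map (Sum.inl (β := σ'))) (fun j => (Q i j).map Sum.inr) where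
  row_inj i j j' s h h' := by
    rcases j with j | j <;> rcases j' with j' | j' <;>
      simp only [Sum.elim_inl, Sum.elim_inr, Option.map_eq_some_iff] at h h' <;>
      obtain ⟨t, ht, rfl⟩ := h <;> obtain ⟨t', ht', htt'⟩ := h' <;>
      simp only [Sum.inl.injEq, Sum.inr.injEq, reduceCtorEq] at htt'
    · rw [htt'] at ht'; rw [hP.row_inj _ _ _ _ ht ht']
    · rw [htt'] at ht'; rw [hQ.row_inj _ _ _ _ ht ht']
  col_inj i i' j s h h' := by
    rcases j with j | j <;>
      simp only [Sum.elim_inl, Sum.elim_inr, Option.map_eq_some_iff] at h h' <;>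
      obtain ⟨t, ht, rfl⟩ := h <;> obtain ⟨t', ht', htt'⟩ := h' <;>
      simp only [Sum.inl.injEq, Sum.inr.injEq] at htt' <;> rw [htt'] at ht'
    · exact hP.col_inj _ _ _ _ ht ht'
    · exact hQ.col_inj _ _ _ _ ht ht'
  eq_none_of_eq_some a c b d s hne h h' := by
    rcases b with b | b <;> rcases d with d | d <;>
      simp only [Sum.elim_inl, Sum.elim_inr, Option.map_eq_some_iff] at h h' <;>
      obtain ⟨t, ht, rfl⟩ := h <;> obtain ⟨t', ht', htt'⟩ := h' <;>
      simp only [Sum.inl.injEq, Sum.inr.injEq, reduceCtorEq] at htt' <;> rw [htt'] at ht'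
    · simp [hP.eq_none_of_eq_some a c b d t (by simpa using hne) ht ht']
    · simp [hQ.eq_none_of_eq_some a c b d t (by simpa using hne) ht ht']
  card_filter_eq_none j := by
    rcases j with j | j
    · simpa using hP.card_filter_eq_none j
    · simpa using hQ.card_filter_eq_none j

theorem of_injective {f : ι × κ → σ} (hf : Injective f) :
    IsPDAOn 0 fun i j => some (f (i, j)) where
  row_inj i j j' s h h' :=
    congrArg Prod.snd (hf ((Option.some_inj.1 h).trans (Option.some_inj.1 h').symm))
  col_inj i i' j s h h' :=
    congrArg Prod.fst (hf ((Option.some_inj.1 h).trans (Option.some_inj.1 h').symm))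
  eq_none_of_eq_some a c b d s hne h h' :=
    absurd (hf ((Option.some_inj.1 h).trans (Option.some_inj.1 h').symm)) hne
  card_filter_eq_none j := by simp

end IsPDAOn

def blockDiag {ι' κ' : Type*} (P : ι → κ → Option σ) (Q : ι' → κ' → Option σ) :
    ι ⊕ ι' → κ ⊕ κ' → Option σ :=
  Sum.elim (fun i => Sum.elim (P i) fun _ => none) fun i => Sum.elim (fun _ => none) (Q i)

theorem IsPDAOn.blockDiag {ι' κ' : Type*} [Fintype ι] [Fintype ι'] {Z Z' W : ℕ}
    {P : ι → κ → Option σ} {Q : ι' → κ' → Option σ} (hP : IsPDAOn Z P) (hQ : IsPDAOn Z' Q)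
    (hZ : Z + Fintype.card ι' = W) (hZ' : Z' + Fintype.card ι = W) :
    IsPDAOn W (blockDiag P Q) where
  row_inj i j j' s h h' := by
    rcases i with i | i <;> rcases j with j | j <;> rcases j' with j' | j' <;>
      simp only [_root_.blockDiag, Sum.elim_inl, Sum.elim_inr, reduceCtorEq] at h h'
    · rw [hP.row_inj _ _ _ _ h h']
    · rw [hQ.row_inj _ _ _ _ h h']
  col_inj i i' j s h h' := by
    rcases j with j | j <;> rcases i with i | i <;> rcases i' with i' | i' <;>
      simp only [_root_.blockDiag, Sum.elim_inl, Sum.elim_inr, reduceCtorEq] at h h'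
    · rw [hP.col_inj _ _ _ _ h h']
    · rw [hQ.col_inj _ _ _ _ h h']
  eq_none_of_eq_some a c b d s hne h h' := by
    rcases a with a | a <;> rcases b with b | b <;> rcases c with c | c <;> rcases d with d | d <;>
      simp only [_root_.blockDiag, Sum.elim_inl, Sum.elim_inr, reduceCtorEq, and_self] at h h' ⊢
    · exact hP.eq_none_of_eq_some a c b d s (by simpa using hne) h h'
    · exact hQ.eq_none_of_eq_some a c b d s (by simpa using hne) h h'
  card_filter_eq_none j := by
    rcases j with j | j
    · have hcol : ({i | _root_.blockDiag P Q i (.inl j) = none} : Finset (ι ⊕ ι')) =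
          ({i | P i j = none} : Finset ι).disjSum univ := by
        ext (i | i) <;>
          simp only [mem_filter, mem_univ, true_and, inl_mem_disjSum, inr_mem_disjSum] <;>
          simp [_root_.blockDiag]
      rw [hcol, card_disjSum, hP.card_filter_eq_none, card_univ, hZ]
    · have hcol : ({i | _root_.blockDiag P Q i (.inr j) = none} : Finset (ι ⊕ ι')) =
          (univ : Finset ι).disjSum {i | Q i j = none} := by
        ext (i | i) <;>
          simp only [mem_filter, mem_univ, true_and, inl_mem_disjSum, inr_mem_disjSum] <;>
          simp [_root_.blockDiag]
      rw [hcol, card_disjSum, hQ.card_filter_eq_none, card_univ, ← hZ', add_comm]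

section EdgeArray

variable (ι) [DecidableEq ι]

def edgeArray (i : ι) (e : {e : Sym2 ι // ¬e.IsDiag}) : Option ι :=
  if h : i ∈ e.1 then some (Sym2.Mem.other' h) else none

variable {ι}

theorem edgeArray_eq_some {i s : ι} {e : {e : Sym2 ι // ¬e.IsDiag}} :
    edgeArray ι i e = some s ↔ e.1 = s(i, s) := by
  unfold edgeArray
  split_ifs with h
  · conv_rhs => rw [← Sym2.other_spec' h]
    rw [Option.some_inj, Sym2.congr_right]
  · simp only [false_iff]
    rintro he
    exact h (he ▸ Sym2.mem_mk_left i s)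

theorem edgeArray_eq_none {i : ι} {e : {e : Sym2 ι // ¬e.IsDiag}} :
    edgeArray ι i e = none ↔ i ∉ e.1 := by
  unfold edgeArray
  split_ifs with h <;> simp [h]

theorem isPDAOn_edgeArray [Fintype ι] : IsPDAOn (Fintype.card ι - 2) (edgeArray ι) where
  row_inj i e e' s h h' :=
    Subtype.ext ((edgeArray_eq_some.1 h).trans (edgeArray_eq_some.1 h').symm)
  col_inj i i' e s h h' :=
    Sym2.congr_left.1 ((edgeArray_eq_some.1 h).symm.trans (edgeArray_eq_some.1 h'))
  eq_none_of_eq_some a c e e' s hne h h' := by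
    rw [edgeArray_eq_some] at h h'
    have hac : a ≠ c := by
      rintro rfl
      exact hne (by rw [Subtype.ext (h.trans h'.symm)])
    have has : a ≠ s := fun has => e.2 (h ▸ Sym2.mk_isDiag_iff.2 has)
    have hcs : c ≠ s := fun hcs => e'.2 (h' ▸ Sym2.mk_isDiag_iff.2 hcs)
    simp [edgeArray_eq_none, h, h', hac, hac.symm, has, hcs]
  card_filter_eq_none e := by
    obtain ⟨⟨a, b⟩, hab⟩ := e
    have hcol : ({i | edgeArray ι i ⟨s(a, b), hab⟩ = none} : Finset ι) = univ \ {a, b} := by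
      ext i; simp [edgeArray_eq_none]
    rw [hcol, card_sdiff_of_subset (subset_univ _), card_univ, card_pair (by simpa using hab)]

end EdgeArray

namespace IsPDAOn

variable [Fintype ι] {P : ι → κ → Option σ} (hP : IsPDAOn (Fintype.card ι - 2) P)
  (hι : 2 ≤ Fintype.card ι)
include hP hι

theorem card_filter_ne_none (j : κ) : #{i | P i j ≠ none} = 2 := by
  have := card_filter_add_card_filter_not (s := univ) (fun i => P i j = none)
  rw [hP.card_filter_eq_none, card_univ] at this
  simp only [ne_eq]
  omega

theorem eq_of_three_ne_none [DecidableEq ι] {a b c : ι} {j : κ} (ha : P a j ≠ none)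
    (hb : P b j ≠ none) (hc : P c j ≠ none) (hac : a ≠ c) (hbc : b ≠ c) : a = b := by
  by_contra hab
  have hsub : {a, b, c} ⊆ ({i | P i j ≠ none} : Finset ι) := by
    simp [insert_subset_iff, ha, hb, hc]
  have := card_le_card hsub
  rw [card_insert_of_notMem (by simp [hab, hac]), card_pair hbc,
    hP.card_filter_ne_none hι] at this
  omega

end IsPDAOn

section UpperBound

variable [Fintype ι] [Fintype κ] [DecidableEq σ]

def cellsOf (P : ι → κ → Option σ) (s : σ) : Finset (ι × κ) := {p | P p.1 p.2 = some s}

def rowsOf (P : ι → κ → Option σ) (s : σ) : Finset ι := {i | ∃ j, P i j = some s}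

def fullSymbols [Fintype σ] (P : ι → κ → Option σ) : Finset σ :=
  {s | #(rowsOf P s) = Fintype.card ι - 1}

def fullSymbolsMissing [Fintype σ] [DecidableEq ι] (P : ι → κ → Option σ) (x : ι) : Finset σ :=
  {s ∈ fullSymbols P | x ∉ rowsOf P s}

variable {P : ι → κ → Option σ}

@[simp]
theorem mem_rowsOf {s : σ} {i : ι} : i ∈ rowsOf P s ↔ ∃ j, P i j = some s := by
  simp [rowsOf]

theorem pairwiseDisjoint_cellsOf (t : Set σ) : t.PairwiseDisjoint (cellsOf P) := by
  intro s _ s' _ hss'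
  refine disjoint_left.2 fun p hs hs' => hss' ?_
  simp only [cellsOf, mem_filter, mem_univ, true_and] at hs hs'
  exact Option.some_inj.1 (hs.symm.trans hs')

namespace IsPDAOn

theorem card_cellsOf [DecidableEq ι] {Z : ℕ} (hP : IsPDAOn Z P) (s : σ) :
    #(cellsOf P s) = #(rowsOf P s) := by
  have hrows : rowsOf P s = (cellsOf P s).image Prod.fst := by
    ext i; simp [cellsOf]
  rw [hrows, card_image_of_injOn]
  intro p hp q hq hpq
  simp only [cellsOf, coe_filter, mem_univ, true_and, Set.mem_ofPred_eq] at hp hq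
  rw [← hpq] at hq
  exact Prod.ext hpq (hP.row_inj _ _ _ _ hp hq)

variable (hP : IsPDAOn (Fintype.card ι - 2) P) (hι : 2 ≤ Fintype.card ι)
include hP hι

theorem sum_card_cellsOf [Fintype σ] [DecidableEq ι] [DecidableEq κ] :
    ∑ s, #(cellsOf P s) = 2 * Fintype.card κ := by
  have hfilled : ({p | P p.1 p.2 ≠ none} : Finset (ι × κ)) = univ.biUnion (cellsOf P) := by
    ext p; simp [cellsOf, Option.ne_none_iff_exists']
  rw [← card_biUnion (pairwiseDisjoint_cellsOf _), ← hfilled, card_filter,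
    Fintype.sum_prod_type_right]
  simp only [← card_filter, hP.card_filter_ne_none hι, sum_const, card_univ, smul_eq_mul,
    mul_comm]

theorem exists_partner [DecidableEq ι] {i : ι} {j : κ} {s : σ} (h : P i j = some s) :
    ∃ x, x ≠ i ∧ P x j ≠ none ∧ x ∉ rowsOf P s := by
  obtain ⟨x, hx, hxi⟩ := exists_mem_ne (s := {i | P i j ≠ none})
    (by rw [hP.card_filter_ne_none hι]; norm_num) i
  rw [mem_filter] at hx
  refine ⟨x, hxi, hx.2, ?_⟩
  simp only [mem_rowsOf, not_exists]
  intro j' hj'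
  by_cases hjj' : j' = j
  · subst hjj'
    exact hxi (hP.col_inj _ _ _ _ hj' h)
  · exact hx.2 (hP.eq_none_of_eq_some i x j j' s (fun h => hjj' (congrArg Prod.snd h).symm)
      h hj').2

theorem card_rowsOf_lt [DecidableEq ι] (s : σ) : #(rowsOf P s) < Fintype.card ι := by
  rcases (rowsOf P s).eq_empty_or_nonempty with hs | ⟨i, hi⟩
  · rw [hs, card_empty]; omega
  · obtain ⟨j, hij⟩ := mem_rowsOf.1 hi
    obtain ⟨x, -, -, hx⟩ := hP.exists_partner hι hij
    exact card_lt_univ_of_notMem hx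

theorem ne_none_of_mem_fullSymbolsMissing [Fintype σ] [DecidableEq ι] {x i : ι} {j : κ}
    {s : σ} (hs : s ∈ fullSymbolsMissing P x) (h : P i j = some s) : P x j ≠ none := by
  simp only [fullSymbolsMissing, fullSymbols, mem_filter, mem_univ, true_and] at hs
  obtain ⟨y, -, hy, hys⟩ := hP.exists_partner hι h
  have hmissing : #(univ \ rowsOf P s) ≤ 1 := by
    rw [card_univ_sdiff, hs.1]; omega
  rwa [card_le_one.1 hmissing y (by simpa using hys) x (by simpa using hs.2)] at hy

theorem injOn_fullSymbolsMissing [Fintype σ] [DecidableEq ι] [DecidableEq κ] (x : ι) :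
    Set.InjOn (fun p : ι × κ => P x p.2) ((fullSymbolsMissing P x).biUnion (cellsOf P)) := by
  intro p hp q hq (hpq : P x p.2 = P x q.2)
  simp only [coe_biUnion, Set.mem_iUnion, cellsOf, coe_filter, Set.mem_ofPred_eq, mem_univ,
    true_and, exists_prop] at hp hq
  obtain ⟨s, hs, hps⟩ := hp
  obtain ⟨s', hs', hqs'⟩ := hq
  have hpx := hP.ne_none_of_mem_fullSymbolsMissing hι hs hps
  obtain ⟨t, ht⟩ := Option.ne_none_iff_exists'.1 hpx
  have hj : p.2 = q.2 := hP.row_inj _ _ _ _ ht (hpq.symm.trans ht)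
  have hpx' : p.1 ≠ x := fun h => (mem_filter.1 hs).2 (mem_rowsOf.2 ⟨p.2, h ▸ hps⟩)
  have hqx' : q.1 ≠ x := fun h => (mem_filter.1 hs').2 (mem_rowsOf.2 ⟨q.2, h ▸ hqs'⟩)
  refine Prod.ext (hP.eq_of_three_ne_none hι (by simp [hps]) (c := x) ?_ hpx hpx' hqx') hj
  simp [hj, hqs']

theorem card_fullSymbolsMissing_mul_le [Fintype σ] [DecidableEq ι] [DecidableEq κ] (x : ι) :
    #(fullSymbolsMissing P x) * Fintype.card ι ≤ Fintype.card σ := by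
  set A := fullSymbolsMissing P x
  have hcard : #(A.biUnion (cellsOf P)) = #A * (Fintype.card ι - 1) := by
    rw [card_biUnion (pairwiseDisjoint_cellsOf _), sum_const_nat]
    intro s hs
    rw [hP.card_cellsOf]
    exact (mem_filter.1 (mem_filter.1 hs).1).2
  have hmaps : Set.MapsTo (fun p : ι × κ => P x p.2) (A.biUnion (cellsOf P))
      ((univ \ A).map Embedding.some) := by
    intro p hp
    simp only [coe_biUnion, Set.mem_iUnion, cellsOf, coe_filter, Set.mem_ofPred_eq, mem_univ,
      true_and, exists_prop] at hp
    obtain ⟨s, hs, hps⟩ := hp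
    obtain ⟨t, ht⟩ :=
      Option.ne_none_iff_exists'.1 (hP.ne_none_of_mem_fullSymbolsMissing hι hs hps)
    refine mem_map.2 ⟨t, mem_sdiff.2 ⟨mem_univ t, fun htA => ?_⟩, ht.symm⟩
    exact (mem_filter.1 htA).2 (mem_rowsOf.2 ⟨_, ht⟩)
  have := card_le_card_of_injOn _ hmaps (hP.injOn_fullSymbolsMissing hι x)
  rw [hcard, card_map, card_univ_sdiff] at this
  have hA_le : #A ≤ Fintype.card σ := card_le_univ A
  calc #A * Fintype.card ι = #A * (Fintype.card ι - 1) + #A := by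
        rw [← Nat.mul_add_one, Nat.sub_add_cancel (by omega)]
    _ ≤ Fintype.card σ := by omega

theorem card_fullSymbols_le [Fintype σ] [DecidableEq ι] [DecidableEq κ] :
    #(fullSymbols P) ≤ Fintype.card ι * (Fintype.card σ / Fintype.card ι) := by
  have hcover : fullSymbols P ⊆ univ.biUnion (fullSymbolsMissing P) := by
    intro s hs
    obtain ⟨x, -, hx⟩ := exists_mem_notMem_of_card_lt_card (s := rowsOf P s) (t := univ)
      (by rw [card_univ]; exact hP.card_rowsOf_lt hι s)
    exact mem_biUnion.2 ⟨x, mem_univ x, mem_filter.2 ⟨hs, hx⟩⟩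
  calc #(fullSymbols P) ≤ ∑ x, #(fullSymbolsMissing P x) :=
        (card_le_card hcover).trans card_biUnion_le
    _ ≤ ∑ _x : ι, Fintype.card σ / Fintype.card ι := sum_le_sum fun x _ =>
        (Nat.le_div_iff_mul_le (by omega)).2 (hP.card_fullSymbolsMissing_mul_le hι x)
    _ = Fintype.card ι * (Fintype.card σ / Fintype.card ι) := by
        rw [sum_const, card_univ, smul_eq_mul]

theorem two_mul_card_le [Fintype σ] [DecidableEq ι] [DecidableEq κ] :
    2 * Fintype.card κ ≤ Fintype.card σ * (Fintype.card ι - 2) +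
      Fintype.card ι * (Fintype.card σ / Fintype.card ι) := by
  have hrows (s : σ) :
      #(rowsOf P s) ≤ (Fintype.card ι - 2) + if s ∈ fullSymbols P then 1 else 0 := by
    have := hP.card_rowsOf_lt hι s
    split_ifs with hs
    · omega
    · simp only [fullSymbols, mem_filter, mem_univ, true_and] at hs; omega
  calc 2 * Fintype.card κ = ∑ s, #(rowsOf P s) := by
        rw [← hP.sum_card_cellsOf hι]; exact sum_congr rfl fun s _ => hP.card_cellsOf s
    _ ≤ ∑ s, ((Fintype.card ι - 2) + if s ∈ fullSymbols P then 1 else 0) :=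
        sum_le_sum fun s _ => hrows s
    _ = Fintype.card σ * (Fintype.card ι - 2) + #(fullSymbols P) := by
        rw [sum_add_distrib, sum_const, card_univ, smul_eq_mul, sum_boole]; simp
    _ ≤ _ := Nat.add_le_add_left (hP.card_fullSymbols_le hι) _

end IsPDAOn

end UpperBound

theorem IsPDAOn.pdaExists [Fintype ι] [Fintype κ] [Fintype σ] {Z K F S : ℕ}
    {P : ι → κ → Option σ} (hP : IsPDAOn Z P) (hι : Fintype.card ι = F)
    (hκ : Fintype.card κ = K) (hσ : Fintype.card σ = S) : PDAExists K F Z S :=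
  ⟨_, isPDA_iff_isPDAOn.2 (hP.reindex (Fintype.equivFinOfCardEq hι)
    (Fintype.equivFinOfCardEq hκ) (Fintype.equivFinOfCardEq hσ).toEmbedding)⟩

theorem two_mul_le_of_isPDA {K F S : ℕ} {P : Fin F → Fin K → Option (Fin S)}
    (hP : IsPDA K F (F - 2) S P) (hF : 2 ≤ F) : 2 * K ≤ S * (F - 2) + F * (S / F) := by
  have hP' : IsPDAOn (Fintype.card (Fin F) - 2) P := by
    rw [Fintype.card_fin]; exact isPDA_iff_isPDAOn.1 hP
  simpa using hP'.two_mul_card_le (by simpa using hF)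

theorem pdaExists_of_four_le (F m : ℕ) (hF : 4 ≤ F) :
    PDAExists (m * F.choose 2 + ((F - 2).choose 2 + (F - 2) / 2)) F (F - 2) (m * F + (F - 2)) := by
  obtain ⟨g⟩ : Nonempty (Fin 2 × Fin ((F - 2) / 2) ↪ Fin (F - 2)) :=
    Function.Embedding.nonempty_of_card_le (by simp; omega)
  have hrows : Fintype.card (Fin (F - 2) ⊕ Fin 2) = F := by simp; omega
  have hcopies := (isPDAOn_edgeArray (ι := Fin (F - 2) ⊕ Fin 2)).replicate (Fin m)
  rw [hrows] at hcopies
  have hblocks := (isPDAOn_edgeArray (ι := Fin (F - 2))).blockDiag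
    (IsPDAOn.of_injective g.injective) (W := F - 2) (by simp; omega) (by simp)
  refine (hcopies.append hblocks).pdaExists hrows ?_ ?_
  · simp only [Fintype.card_sum, Fintype.card_prod, Sym2.card_subtype_not_diag, hrows,
      Fintype.card_fin]
  · simp [hrows]

theorem two_mul_choose_two (n : ℕ) : 2 * n.choose 2 = n * (n - 1) := by
  rw [Nat.choose_two_right, Nat.two_mul_div_two_of_even (Nat.even_mul_pred_self n)]

theorem mul_sub_two_add_mul_div_eq (F m : ℕ) (hF : 2 ≤ F) :
    (m * F + (F - 2)) * (F - 2) + F * ((m * F + (F - 2)) / F) =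
      2 * (m * F.choose 2 + (F - 2).choose 2) + (F - 2) := by
  rw [Nat.div_eq_of_lt_le (k := m) (by omega) (by rw [add_mul]; omega), mul_add, mul_left_comm,
    two_mul_choose_two, two_mul_choose_two]
  obtain ⟨f, rfl⟩ : ∃ f, F = f + 2 := ⟨F - 2, by omega⟩
  rcases f with _ | f
  · simp [mul_comm]
  · rw [Nat.add_sub_cancel, show f + 1 + 2 - 1 = f + 2 by omega, Nat.add_sub_cancel]
    ring

theorem pda_optimal_S_eq_mF_add_F_sub_two_general (F m : ℕ) (hF : 4 ≤ F) :
    IsGreatest {K : ℕ | PDAExists K F (F - 2) (m * F + F - 2)}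
      ((m * F * (F - 1) + (F - 2) * (F - 3)) / 2 + (F - 2) / 2) := by
  have hformula : (m * F * (F - 1) + (F - 2) * (F - 3)) / 2 + (F - 2) / 2 =
      m * F.choose 2 + ((F - 2).choose 2 + (F - 2) / 2) := by
    rw [mul_assoc, ← two_mul_choose_two,
      show (F - 2) * (F - 3) = 2 * (F - 2).choose 2 from (two_mul_choose_two (F - 2)).symm,
      mul_left_comm, ← mul_add,
      Nat.mul_div_cancel_left _ two_pos, add_assoc]
  rw [hformula, Nat.add_sub_assoc (by omega)]
  refine ⟨pdaExists_of_four_le F m hF, fun K ⟨P, hP⟩ => ?_⟩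
  have hK := two_mul_le_of_isPDA hP (by omega)
  rw [mul_sub_two_add_mul_div_eq F m (by omega)] at hK
  omega

theorem pda_optimal_S_eq_mF_add_F_sub_two (F m : ℕ) (hF : 4 ≤ F) (hm : 1 ≤ m) :
    IsGreatest {K : ℕ | PDAExists K F (F - 2) (m * F + F - 2)}
      ((m * F * (F - 1) + (F - 2) * (F - 3)) / 2 + (F - 2) / 2) :=
  pda_optimal_S_eq_mF_add_F_sub_two_general F m hF
end

section
/- Let F ∈ {2,3,4,5,6}, let S be a positive integer, and let d = gcd(F,S). Then the maximum K for which a (K, F, F−2, S)-PDA exists equals ((F−1)·(S−1) + d − 1)/2; i.e., K_{(F,2,S)} = (F−1)(S−1)/2 + (d−1)/2. -/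
/-!
Every column of a `(K, F, F - 2, S)`-PDA has exactly two integer entries. By the corner condition
the other integer of a column containing the symbol `t` lies in a row without `t`; so every symbol
occurs in at most `F - 1` rows, and `2K + e = S(F - 1)`, where the deficiency `e` adds up the
shortfalls `F - 1 - mult t`.

Fix a row `v`. Each column where `v` holds an integer pairs `v` with the symbol of the other
integer of that column, never a symbol of row `v`; so summing `pairCount v t + 1` over the symbols
`t` missing from `v` gives `S`. A symbol of full multiplicity `F - 1` is missing only from `v`,
and it then contributes exactly `F`. Hence the contribution of the deficient symbols is `≡ S` mod
`F`, and summed over all rows it equals `F u`, where `u ≤ e` is the number of deficient symbols.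
If `F ∤ S`, this gives `S % F ≤ u`, `F ≤ e + u`, and `u = S % F` when `e + u = F`. For `F ≤ 6`
these bounds yield `K ≤ ((F - 1)(S - 1) + gcd(F, S) - 1) / 2`.

Conversely, for `S ≤ F` the bound is attained by explicit small arrays, and juxtaposing one more
copy of the `(F(F - 1)/2, F, F - 2, F)`-array adds `F` to `S` and raises the bound by exactly
`F(F - 1)/2`.
-/

open Finset

lemma card_filter_eq_ite_exists {α : Type*} [Fintype α] {p : α → Prop} [DecidablePred p]
    (h : ∀ a b, p a → p b → a = b) : #{a | p a} = if ∃ a, p a then 1 else 0 := by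
  split_ifs with hex
  · obtain ⟨a, ha⟩ := hex
    exact card_eq_one.mpr ⟨a, by ext b; simpa using ⟨fun hb => h b a hb ha, fun hb => hb ▸ ha⟩⟩
  · simpa using hex

lemma card_filter_some_eq {α : Type*} [Fintype α] [DecidableEq α] (o : Option α) :
    #{a | o = some a} = if o ≠ none then 1 else 0 := by
  cases o <;> simp [filter_eq]

def pdaBound (F S : ℕ) : ℕ := ((F - 1) * (S - 1) + Nat.gcd F S - 1) / 2

lemma pdaBound_add_self {F S : ℕ} (hS : 0 < S) :
    pdaBound F (S + F) = pdaBound F S + pdaBound F F := by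
  obtain ⟨k, hk⟩ := Nat.even_mul_pred_self F
  have hg := Nat.gcd_pos_of_pos_right F hS
  have hmul : (F - 1) * (S + F - 1) = (F - 1) * (S - 1) + F * (F - 1) := by
    rw [mul_comm F, ← mul_add]; congr 1; omega
  have hself : (F - 1) * (F - 1) + F - 1 = F * (F - 1) := by
    cases F <;> simp [add_mul]
  rw [pdaBound, pdaBound, pdaBound, Nat.gcd_add_self_right, Nat.gcd_self, hmul, hself, hk]
  omega

lemma pdaExists_zero (F Z S : ℕ) : PDAExists 0 F Z S :=
  ⟨fun _ j => j.elim0, fun _ j => j.elim0, fun _ _ j => j.elim0, fun _ _ j => j.elim0,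
    fun j => j.elim0⟩

lemma PDAExists.append {K₁ K₂ F Z S₁ S₂ : ℕ} (h₁ : PDAExists K₁ F Z S₁)
    (h₂ : PDAExists K₂ F Z S₂) : PDAExists (K₁ + K₂) F Z (S₁ + S₂) := by
  obtain ⟨P₁, hr₁, hc₁, hx₁, hz₁⟩ := h₁
  obtain ⟨P₂, hr₂, hc₂, hx₂, hz₂⟩ := h₂
  have hdisj (x : Fin S₁) (y : Fin S₂) : Fin.castAdd S₂ x ≠ Fin.natAdd S₁ y := by
    rw [Ne, Fin.ext_iff]; simp; omega
  refine ⟨fun i => Fin.append (fun j => (P₁ i j).map (Fin.castAdd S₂))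
    (fun j => (P₂ i j).map (Fin.natAdd S₁)), ?_, ?_, ?_, ?_⟩
  · intro i j j' s
    induction s using Fin.addCases <;> induction j using Fin.addCases <;>
      induction j' using Fin.addCases <;>
      simp [Option.map_eq_some_iff, hdisj, (hdisj _ _).symm]
    exacts [hr₁ i _ _ _, hr₂ i _ _ _]
  · intro i i' j s
    induction s using Fin.addCases <;> induction j using Fin.addCases <;>
      simp [Option.map_eq_some_iff, hdisj, (hdisj _ _).symm]
    exacts [hc₁ _ _ _ _, hc₂ _ _ _ _]
  · intro a c b d s
    induction s using Fin.addCases <;> induction b using Fin.addCases <;>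
      induction d using Fin.addCases <;>
      simp [Option.map_eq_some_iff, hdisj, (hdisj _ _).symm]
    exacts [fun h => hx₁ a c _ _ _ (by simpa using h), fun h => hx₂ a c _ _ _ (by simpa using h)]
  · intro j
    induction j using Fin.addCases <;> simp [hz₁, hz₂]

-- In the `(F(F - 1)/2, F, F - 2, F)`-arrays, the column of a pair `a < b` holds `b` in row `a`
-- and `a` in row `b`.
lemma pdaExists_1_2_0_2 : PDAExists 1 2 0 2 :=
  ⟨![![some 1],
    ![some 0]],
    by unfold IsPDA; decide +kernel⟩

lemma pdaExists_3_3_1_3 : PDAExists 3 3 1 3 :=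
  ⟨![![some 1, some 2, none],
    ![some 0, none, some 2],
    ![none, some 0, some 1]],
    by unfold IsPDA; decide +kernel⟩

lemma pdaExists_6_4_2_4 : PDAExists 6 4 2 4 :=
  ⟨![![some 1, some 2, some 3, none, none, none],
    ![some 0, none, none, some 2, some 3, none],
    ![none, some 0, none, some 1, none, some 3],
    ![none, none, some 0, none, some 1, some 2]],
    by unfold IsPDA; decide +kernel⟩

lemma pdaExists_10_5_3_5 : PDAExists 10 5 3 5 :=
  ⟨![![some 1, some 2, some 3, some 4, none, none, none, none, none, none],
    ![some 0, none, none, none, some 2, some 3, some 4, none, none, none],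
    ![none, some 0, none, none, some 1, none, none, some 3, some 4, none],
    ![none, none, some 0, none, none, some 1, none, some 2, none, some 4],
    ![none, none, none, some 0, none, none, some 1, none, some 2, some 3]],
    by unfold IsPDA; decide +kernel⟩

lemma pdaExists_15_6_4_6 : PDAExists 15 6 4 6 :=
  ⟨![![some 1, some 2, some 3, some 4, some 5, none, none, none, none, none, none, none, none, none, none],
    ![some 0, none, none, none, none, some 2, some 3, some 4, some 5, none, none, none, none, none, none],
    ![none, some 0, none, none, none, some 1, none, none, none, some 3, some 4, some 5, none, none, none],
    ![none, none, some 0, none, none, none, some 1, none, none, some 2, none, none, some 4, some 5, none],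
    ![none, none, none, some 0, none, none, none, some 1, none, none, some 2, none, some 3, none, some 5],
    ![none, none, none, none, some 0, none, none, none, some 1, none, none, some 2, none, some 3, some 4]],
    by unfold IsPDA; decide +kernel⟩

lemma pdaExists_1_3_1_2 : PDAExists 1 3 1 2 :=
  ⟨![![some 0],
    ![some 1],
    ![none]],
    by unfold IsPDA; decide +kernel⟩

lemma pdaExists_2_4_2_2 : PDAExists 2 4 2 2 :=
  ⟨![![some 0, none],
    ![some 1, none],
    ![none, some 0],
    ![none, some 1]],
    by unfold IsPDA; decide +kernel⟩

lemma pdaExists_3_4_2_3 : PDAExists 3 4 2 3 :=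
  ⟨![![some 0, some 2, none],
    ![some 1, none, some 2],
    ![none, some 1, some 0],
    ![none, none, none]],
    by unfold IsPDA; decide +kernel⟩

lemma pdaExists_2_5_3_2 : PDAExists 2 5 3 2 :=
  ⟨![![some 0, none],
    ![some 1, none],
    ![none, some 0],
    ![none, some 1],
    ![none, none]],
    by unfold IsPDA; decide +kernel⟩

lemma pdaExists_4_5_3_3 : PDAExists 4 5 3 3 :=
  ⟨![![some 0, some 2, none, none],
    ![some 1, none, some 2, none],
    ![none, some 1, some 0, none],
    ![none, none, none, some 0],
    ![none, none, none, some 1]],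
    by unfold IsPDA; decide +kernel⟩

lemma pdaExists_6_5_3_4 : PDAExists 6 5 3 4 :=
  ⟨![![some 0, some 2, some 3, none, none, none],
    ![some 1, none, none, some 2, some 3, none],
    ![none, some 1, none, some 0, none, some 3],
    ![none, none, some 1, none, some 0, some 2],
    ![none, none, none, none, none, none]],
    by unfold IsPDA; decide +kernel⟩

lemma pdaExists_3_6_4_2 : PDAExists 3 6 4 2 :=
  ⟨![![some 0, none, none],
    ![some 1, none, none],
    ![none, some 0, none],
    ![none, some 1, none],
    ![none, none, some 0],
    ![none, none, some 1]],
    by unfold IsPDA; decide +kernel⟩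

lemma pdaExists_6_6_4_3 : PDAExists 6 6 4 3 :=
  ⟨![![some 0, some 2, none, none, none, none],
    ![some 1, none, some 2, none, none, none],
    ![none, some 1, some 0, none, none, none],
    ![none, none, none, some 0, some 2, none],
    ![none, none, none, some 1, none, some 2],
    ![none, none, none, none, some 1, some 0]],
    by unfold IsPDA; decide +kernel⟩

lemma pdaExists_8_6_4_4 : PDAExists 8 6 4 4 :=
  ⟨![![some 0, some 2, none, none, none, none, none, none],
    ![some 1, some 3, none, none, none, none, none, none],
    ![none, none, some 0, some 2, some 3, none, none, none],
    ![none, none, some 1, none, none, some 2, some 3, none],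
    ![none, none, none, some 1, none, some 0, none, some 3],
    ![none, none, none, none, some 1, none, some 0, some 2]],
    by unfold IsPDA; decide +kernel⟩

lemma pdaExists_10_6_4_5 : PDAExists 10 6 4 5 :=
  ⟨![![some 0, some 2, some 3, some 4, none, none, none, none, none, none],
    ![some 1, none, none, none, some 2, some 3, some 4, none, none, none],
    ![none, some 1, none, none, some 0, none, none, some 3, some 4, none],
    ![none, none, some 1, none, none, some 0, none, some 2, none, some 4],
    ![none, none, none, some 1, none, none, some 0, none, some 2, some 3],
    ![none, none, none, none, none, none, none, none, none, none]],
    by unfold IsPDA; decide +kernel⟩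

lemma pdaExists_pdaBound_of_le {F S : ℕ} (hF : F ∈ ({2, 3, 4, 5, 6} : Finset ℕ)) (hS : 0 < S)
    (hSF : S ≤ F) : PDAExists (pdaBound F S) F (F - 2) S := by
  simp only [Finset.mem_insert, Finset.mem_singleton] at hF
  rcases hF with rfl | rfl | rfl | rfl | rfl <;> interval_cases S
  exacts [pdaExists_zero .., pdaExists_1_2_0_2,
    pdaExists_zero .., pdaExists_1_3_1_2, pdaExists_3_3_1_3,
    pdaExists_zero .., pdaExists_2_4_2_2, pdaExists_3_4_2_3, pdaExists_6_4_2_4,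
    pdaExists_zero .., pdaExists_2_5_3_2, pdaExists_4_5_3_3, pdaExists_6_5_3_4, pdaExists_10_5_3_5,
    pdaExists_zero .., pdaExists_3_6_4_2, pdaExists_6_6_4_3, pdaExists_8_6_4_4, pdaExists_10_6_4_5,
    pdaExists_15_6_4_6]

lemma pdaExists_pdaBound {F S : ℕ} (hF : F ∈ ({2, 3, 4, 5, 6} : Finset ℕ)) (hS : 0 < S) :
    PDAExists (pdaBound F S) F (F - 2) S := by
  have hF2 : 2 ≤ F := by simp only [Finset.mem_insert, Finset.mem_singleton] at hF; omega
  induction S using Nat.strong_induction_on with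
  | _ S ih =>
    by_cases hSF : S ≤ F
    · exact pdaExists_pdaBound_of_le hF hS hSF
    · obtain ⟨S, rfl⟩ : ∃ S', S = S' + F := ⟨S - F, by omega⟩
      rw [pdaBound_add_self (by omega)]
      exact (ih S (by omega) (by omega)).append (pdaExists_pdaBound_of_le hF (by omega) le_rfl)

namespace PDA

variable {K F S : ℕ} (P : Fin F → Fin K → Option (Fin S))

def rowsWith (t : Fin S) : Finset (Fin F) := {v | ∃ j, P v j = some t}

def mult (t : Fin S) : ℕ := #(rowsWith P t)

def Paired (v : Fin F) (j : Fin K) (t : Fin S) : Prop := P v j ≠ none ∧ ∃ i ≠ v, P i j = some t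

instance (v : Fin F) (j : Fin K) (t : Fin S) : Decidable (Paired P v j t) := by
  unfold Paired; infer_instance

def pairCount (v : Fin F) (t : Fin S) : ℕ := #{j | Paired P v j t}

def deficient : Finset (Fin S) := {t | mult P t < F - 1}

def deficiency : ℕ := ∑ t, (F - 1 - mult P t)

def missingDeficient (v : Fin F) : Finset (Fin S) := {t | v ∉ rowsWith P t ∧ t ∈ deficient P}

def rowWeight (v : Fin F) : ℕ := ∑ t ∈ missingDeficient P v, (pairCount P v t + 1)

lemma card_filter_notMem_rowsWith (t : Fin S) : #{v | v ∉ rowsWith P t} = F - mult P t := by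
  rw [filter_not, filter_mem_eq_inter, univ_inter, card_sdiff_of_subset (subset_univ _), card_univ,
    Fintype.card_fin, mult]

lemma card_deficient_le_deficiency : #(deficient P) ≤ deficiency P := by
  rw [deficient, card_filter, deficiency]
  gcongr with t
  split_ifs <;> omega

lemma sum_sum_missingDeficient (f : Fin F → Fin S → ℕ) :
    ∑ v, ∑ t ∈ missingDeficient P v, f v t =
      ∑ t ∈ deficient P, ∑ v with v ∉ rowsWith P t, f v t :=
  sum_comm' fun v t => by simp [missingDeficient, and_comm]

lemma sum_card_missingDeficient :
    ∑ v, #(missingDeficient P v) = deficiency P + #(deficient P) := by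
  calc ∑ v, #(missingDeficient P v) = ∑ t ∈ deficient P, #{v | v ∉ rowsWith P t} := by
        simpa only [card_eq_sum_ones] using sum_sum_missingDeficient P fun _ _ => 1
    _ = ∑ t ∈ deficient P, ((F - 1 - mult P t) + 1) := sum_congr rfl fun t ht => by
        rw [card_filter_notMem_rowsWith]
        have := (mem_filter.mp ht).2
        omega
    _ = deficiency P + #(deficient P) := by
        rw [sum_add_distrib, deficiency, deficient, sum_filter_of_ne fun t _ h => by omega]
        simp

end PDA

namespace IsPDA

open PDA

variable {K F Z S : ℕ} {P : Fin F → Fin K → Option (Fin S)}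

lemma card_filter_eq_some_row (hP : IsPDA K F Z S P) (v : Fin F) (t : Fin S) :
    #{j | P v j = some t} = if v ∈ rowsWith P t then 1 else 0 := by
  rw [card_filter_eq_ite_exists fun j j' => hP.1 v j j' t]
  simp [rowsWith]

lemma sum_card_filter_eq_some (hP : IsPDA K F Z S P) (t : Fin S) :
    ∑ v, #{j | P v j = some t} = mult P t := by
  simp [hP.card_filter_eq_some_row, mult]

lemma pairCount_eq_zero (hP : IsPDA K F Z S P) {v : Fin F} {t : Fin S}
    (hv : v ∈ rowsWith P t) : pairCount P v t = 0 := by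
  obtain ⟨j', hj'⟩ := (mem_filter.mp hv).2
  refine card_eq_zero.mpr (filter_eq_empty_iff.mpr fun j _ ⟨hvj, i, hiv, hij⟩ => hvj ?_)
  exact (hP.2.2.1 i v j j' t (fun h => hiv (congrArg Prod.fst h)) hij hj').2

section TwoPerColumn

variable (hP : IsPDA K F (F - 2) S P) (hF : 2 ≤ F)
include hP hF

lemma card_filter_ne_none (j : Fin K) : #{i | P i j ≠ none} = 2 := by
  have := card_filter_add_card_filter_not (s := univ) (fun i => P i j = none)
  rw [hP.2.2.2 j, card_univ, Fintype.card_fin] at this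
  simp only [ne_eq]
  omega

lemma exists_partner {v : Fin F} {j : Fin K} (hv : P v j ≠ none) :
    ∃ w ≠ v, ∀ i, P i j ≠ none ↔ i = v ∨ i = w := by
  obtain ⟨a, b, hab, hj⟩ := card_eq_two.mp (card_filter_ne_none hP hF j)
  have hmem (i) : P i j ≠ none ↔ i = a ∨ i = b := by simpa using congrArg (i ∈ ·) hj
  rcases (hmem v).mp hv with rfl | rfl
  · exact ⟨b, hab.symm, hmem⟩
  · exact ⟨a, hab, fun i => (hmem i).trans or_comm⟩

lemma card_paired_column (j : Fin K) (t : Fin S) :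
    #{v | Paired P v j t} = #{i | P i j = some t} := by
  by_cases ht : ∃ i, P i j = some t
  · obtain ⟨i, hi⟩ := ht
    obtain ⟨w, hwi, hw⟩ := exists_partner hP hF (j := j) (v := i) (by simp [hi])
    have hpaired : ∀ v, Paired P v j t ↔ v = w := by
      refine fun v => ⟨fun ⟨hv, i', hi'v, hi'⟩ => ?_,
        fun hvw => hvw ▸ ⟨(hw w).mpr (.inr rfl), i, hwi.symm, hi⟩⟩
      obtain rfl := hP.2.1 i' i j t hi' hi
      exact ((hw v).mp hv).resolve_left (Ne.symm hi'v)
    rw [card_filter_eq_ite_exists fun a b ha hb =>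
        ((hpaired a).mp ha).trans ((hpaired b).mp hb).symm,
      card_filter_eq_ite_exists fun a b ha hb => hP.2.1 a b j t ha hb,
      if_pos ⟨w, (hpaired w).mpr rfl⟩, if_pos ⟨i, hi⟩]
  · simp only [not_exists] at ht
    have : ∀ v, ¬ Paired P v j t := fun v ⟨_, i, _, hi⟩ => ht i hi
    simp [this, ht]

lemma card_paired_cell (v : Fin F) (j : Fin K) :
    #{t | Paired P v j t} = #{t | P v j = some t} := by
  cases hv : P v j with
  | none => simp [Paired, hv]
  | some s =>
    obtain ⟨w, hwv, hw⟩ := exists_partner hP hF (j := j) (v := v) (by simp [hv])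
    obtain ⟨r, hr⟩ := Option.ne_none_iff_exists'.mp ((hw w).mpr (.inr rfl))
    have hpaired : ∀ t, Paired P v j t ↔ t = r := by
      refine fun t => ⟨fun ⟨_, i, hiv, hi⟩ => ?_, fun htr => htr ▸ ⟨by simp [hv], w, hwv, hr⟩⟩
      obtain rfl := ((hw i).mp (by simp [hi])).resolve_left hiv
      exact Option.some_injective _ (hi.symm.trans hr)
    simp [hpaired, filter_eq', filter_eq]

lemma sum_mult : ∑ t, mult P t = 2 * K := by
  calc ∑ t, mult P t = ∑ t, ∑ v, #{j | P v j = some t} := by simp [hP.sum_card_filter_eq_some]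
    _ = ∑ v, ∑ j, #{t | P v j = some t} := by
      rw [sum_comm]
      exact sum_congr rfl fun v _ => sum_card_bipartiteAbove_eq_sum_card_bipartiteBelow _
    _ = ∑ j, #{v | P v j ≠ none} := by
      rw [sum_comm]
      refine sum_congr rfl fun j _ => ?_
      simp only [card_filter_some_eq]
      rw [card_filter]
    _ = 2 * K := by simp [card_filter_ne_none hP hF, mul_comm]

lemma sum_pairCount_symbols (v : Fin F) : ∑ t, pairCount P v t = #{t | v ∈ rowsWith P t} := by
  calc ∑ t, pairCount P v t = ∑ j, #{t | Paired P v j t} :=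
        (sum_card_bipartiteAbove_eq_sum_card_bipartiteBelow _).symm
    _ = ∑ j, #{t | P v j = some t} := sum_congr rfl fun j _ => card_paired_cell hP hF v j
    _ = ∑ t, #{j | P v j = some t} := sum_card_bipartiteAbove_eq_sum_card_bipartiteBelow _
    _ = #{t | v ∈ rowsWith P t} := by simp [hP.card_filter_eq_some_row]

lemma sum_pairCount_rows (t : Fin S) : ∑ v, pairCount P v t = mult P t := by
  calc ∑ v, pairCount P v t = ∑ j, #{v | Paired P v j t} :=
        sum_card_bipartiteAbove_eq_sum_card_bipartiteBelow _
    _ = ∑ j, #{i | P i j = some t} := sum_congr rfl fun j _ => card_paired_column hP hF j t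
    _ = mult P t := by
      rw [← hP.sum_card_filter_eq_some t]
      exact (sum_card_bipartiteAbove_eq_sum_card_bipartiteBelow _).symm

lemma mult_le (t : Fin S) : mult P t ≤ F - 1 := by
  by_contra! h
  have hall : rowsWith P t = univ := eq_univ_of_card _ <|
    le_antisymm (card_le_univ _) (by rw [Fintype.card_fin]; unfold mult at h; omega)
  have := sum_pairCount_rows hP hF t
  rw [sum_eq_zero fun v _ => hP.pairCount_eq_zero (hall ▸ mem_univ v)] at this
  omega

lemma pairCount_le_mult (v : Fin F) (t : Fin S) : pairCount P v t ≤ mult P t :=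
  sum_pairCount_rows hP hF t ▸
    single_le_sum (f := fun v => pairCount P v t) (fun _ _ => Nat.zero_le _) (mem_univ v)

lemma pairCount_eq_of_mult_eq {v : Fin F} {t : Fin S} (hm : mult P t = F - 1)
    (hv : v ∉ rowsWith P t) : pairCount P v t = F - 1 := by
  have hrows : rowsWith P t = univ.erase v :=
    eq_of_subset_of_card_le (fun w hw => mem_erase.mpr ⟨fun h => hv (h ▸ hw), mem_univ w⟩)
      (by rw [card_erase_of_mem (mem_univ v), card_univ, Fintype.card_fin]; exact hm.ge)
  rw [← hm, ← sum_pairCount_rows hP hF t, sum_eq_single v (fun w _ hwv =>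
    hP.pairCount_eq_zero (hrows ▸ mem_erase.mpr ⟨hwv, mem_univ w⟩)) (by simp)]

lemma two_mul_add_deficiency : 2 * K + deficiency P = S * (F - 1) := by
  rw [← sum_mult hP hF, deficiency, ← sum_add_distrib,
    sum_congr rfl fun t _ => Nat.add_sub_cancel' (mult_le hP hF t)]
  simp

lemma sum_pairCount_add_one_rows (t : Fin S) :
    ∑ v with v ∉ rowsWith P t, (pairCount P v t + 1) = F := by
  have hzero : ∑ v with v ∉ rowsWith P t, pairCount P v t = ∑ v, pairCount P v t :=
    sum_filter_of_ne fun v _ h hv => h (hP.pairCount_eq_zero hv)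
  rw [sum_add_distrib, hzero, sum_pairCount_rows hP hF t, sum_const, smul_eq_mul, mul_one,
    card_filter_notMem_rowsWith]
  have := mult_le hP hF t
  omega

lemma sum_pairCount_add_one_symbols (v : Fin F) :
    ∑ t with v ∉ rowsWith P t, (pairCount P v t + 1) = S := by
  have hzero : ∑ t with v ∉ rowsWith P t, pairCount P v t = ∑ t, pairCount P v t :=
    sum_filter_of_ne fun t _ h hv => h (hP.pairCount_eq_zero hv)
  rw [sum_add_distrib, hzero, sum_pairCount_symbols hP hF v]
  simpa using card_filter_add_card_filter_not (s := univ) (fun t => v ∈ rowsWith P t)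

lemma rowWeight_mod (v : Fin F) : rowWeight P v % F = S % F := by
  have hfull : ∀ t ∈ ({t | v ∉ rowsWith P t ∧ t ∉ deficient P} : Finset _),
      pairCount P v t + 1 = F := fun t ht => by
    simp only [deficient, mem_filter, mem_univ, true_and, not_lt] at ht
    rw [pairCount_eq_of_mult_eq hP hF (le_antisymm (mult_le hP hF t) ht.2) ht.1]
    omega
  have hS := sum_pairCount_add_one_symbols hP hF v
  rw [← sum_filter_add_sum_filter_not _ (· ∈ deficient P), filter_filter, filter_filter,
    sum_congr rfl hfull, sum_const, smul_eq_mul] at hS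
  calc rowWeight P v % F
      = (rowWeight P v + #{t | v ∉ rowsWith P t ∧ t ∉ deficient P} * F) % F :=
        (Nat.add_mul_mod_self_right _ _ _).symm
    _ = S % F := congrArg (· % F) hS

lemma rowWeight_le (v : Fin F) : rowWeight P v ≤ (F - 1) * #(missingDeficient P v) := by
  rw [mul_comm, ← smul_eq_mul]
  refine sum_le_card_nsmul _ _ _ fun t ht => ?_
  simp only [missingDeficient, deficient, mem_filter, mem_univ, true_and] at ht
  have := pairCount_le_mult hP hF v t
  omega

lemma sum_rowWeight : ∑ v, rowWeight P v = F * #(deficient P) := by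
  simp only [rowWeight]
  rw [sum_sum_missingDeficient, sum_congr rfl fun t _ => sum_pairCount_add_one_rows hP hF t,
    sum_const, smul_eq_mul, mul_comm]

lemma one_le_card_missingDeficient (hS : S % F ≠ 0) (v : Fin F) :
    1 ≤ #(missingDeficient P v) := by
  by_contra! h
  have hle := rowWeight_le hP hF v
  rw [Nat.lt_one_iff.mp h, mul_zero, Nat.le_zero] at hle
  exact hS (hle ▸ rowWeight_mod hP hF v).symm

lemma mod_le_card_deficient : S % F ≤ #(deficient P) := by
  have h : ∑ _v : Fin F, S % F ≤ ∑ v, rowWeight P v :=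
    sum_le_sum fun v _ => rowWeight_mod hP hF v ▸ Nat.mod_le _ _
  rw [sum_rowWeight hP hF, sum_const, card_univ, Fintype.card_fin, smul_eq_mul] at h
  exact Nat.le_of_mul_le_mul_left h (by omega)

lemma le_deficiency_add_card_deficient (hS : S % F ≠ 0) :
    F ≤ deficiency P + #(deficient P) := by
  rw [← sum_card_missingDeficient P]
  simpa using sum_le_sum fun v (_ : v ∈ univ) => one_le_card_missingDeficient hP hF hS v

lemma card_deficient_eq_mod (hS : S % F ≠ 0) (h : deficiency P + #(deficient P) = F) :
    #(deficient P) = S % F := by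
  have hone : ∀ v, #(missingDeficient P v) = 1 := by
    have hsum : ∑ v, #(missingDeficient P v) = ∑ _v : Fin F, 1 := by
      simp [sum_card_missingDeficient P, h]
    exact fun v => ((sum_eq_sum_iff_of_le fun v _ => one_le_card_missingDeficient hP hF hS v).mp
      hsum.symm v (mem_univ v)).symm
  have hrow : ∀ v, rowWeight P v = S % F := fun v => by
    have hlt : rowWeight P v < F := by have := rowWeight_le hP hF v; rw [hone v] at this; omega
    rw [← rowWeight_mod hP hF v, Nat.mod_eq_of_lt hlt]
  have := sum_rowWeight hP hF
  simp only [hrow, sum_const, card_univ, Fintype.card_fin, smul_eq_mul] at this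
  exact (Nat.eq_of_mul_eq_mul_left (by omega) this).symm

end TwoPerColumn

end IsPDA

lemma le_pdaBound_of_deficiency {F S K e u : ℕ} (hF : F ∈ ({2, 3, 4, 5, 6} : Finset ℕ))
    (hK : 2 * K + e = S * (F - 1)) (hue : u ≤ e) (hmod : S % F ≤ u)
    (hpos : S % F ≠ 0 → F ≤ e + u ∧ (e + u = F → u = S % F)) : K ≤ pdaBound F S := by
  rw [pdaBound, Nat.gcd_rec]
  simp only [Finset.mem_insert, Finset.mem_singleton] at hF
  rcases hF with rfl | rfl | rfl | rfl | rfl <;>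
  · generalize hr : S % _ = r at hmod hpos ⊢
    have : r < _ := hr ▸ Nat.mod_lt S (by norm_num)
    interval_cases r <;> norm_num at hpos ⊢ <;> omega

theorem pda_optimal_small_F (F S : ℕ) (hF : F ∈ ({2, 3, 4, 5, 6} : Finset ℕ)) (hS : 0 < S)
    (d : ℕ) (hd : d = Nat.gcd F S) :
    IsGreatest {K : ℕ | PDAExists K F (F - 2) S} (((F - 1) * (S - 1) + d - 1) / 2) := by
  subst hd
  have hF2 : 2 ≤ F := by simp only [Finset.mem_insert, Finset.mem_singleton] at hF; omega
  refine ⟨pdaExists_pdaBound hF hS, fun K ⟨P, hP⟩ => ?_⟩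
  exact le_pdaBound_of_deficiency hF (hP.two_mul_add_deficiency hF2)
    (PDA.card_deficient_le_deficiency P) (hP.mod_le_card_deficient hF2)
    fun hr => ⟨hP.le_deficiency_add_card_deficient hF2 hr, hP.card_deficient_eq_mod hF2 hr⟩
end
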